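/- Let a ∈ F_q^*, b = 0, and (u,v) ∈ F_q² with (u,v) ≠ (0,0). Then the Hamming weight of the codeword c_{(u,v)} of C_{D_{(a,0)}} is (1/4)·q·(q + 1 + S(a,0)) if v ≠ 0, and is (1/4)·q·(q + S(a,0) − S(a,u)) if v = 0. -/

import Mathlib

open scoped BigOperators

noncomputable section

namespace Paper

/-- The additive character value `(-1)^{Tr(x)}` as an integer, where `Tr` is the
trace from `F` to `F_2`. -/
def chi {F : Type*} [Field F] [Fintype F] [Algebra (ZMod 2) F] (x : F) : ℤ :=
  if Algebra.trace (ZMod 2) F x = 0 then 1 else -1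

/-- The exponential sum `S(a,b) = Σ_{x ∈ F_q^*} (-1)^{Tr(a x^{(q-1)/l^m} + b x)}`. -/
def Sab (l m : ℕ) {F : Type*} [Field F] [Fintype F] [Algebra (ZMod 2) F] (a b : F) : ℤ :=
  letI : Fintype Fˣ := Fintype.ofFinite Fˣ
  ∑ x : Fˣ, chi (a * (x : F) ^ ((Fintype.card F - 1) / l ^ m) + b * (x : F))

/-- The exponential sum `S(a) = Σ_{i=0}^{l^m-1} (-1)^{Tr(a α^i)}`. -/
def Sa (l m : ℕ) {F : Type*} [Field F] [Fintype F] [Algebra (ZMod 2) F] (α a : F) : ℤ :=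
  ∑ i ∈ Finset.range (l ^ m), chi (a * α ^ i)

/-- The defining set `D_{(a,b)} = {(x,y) ≠ (0,0) : Tr(a x^{(q-1)/l^m} + b y) = 0}`. -/
def Dset (l m : ℕ) {F : Type*} [Field F] [Fintype F] [Algebra (ZMod 2) F] (a b : F) :
    Set (F × F) :=
  {p | p ≠ 0 ∧
    Algebra.trace (ZMod 2) F (a * p.1 ^ ((Fintype.card F - 1) / l ^ m) + b * p.2) = 0}

/-- The `F_2`-linear map sending `(u,v) ∈ F_q²` to the codeword
`(Tr(u x + v y))_{(x,y) ∈ D_{(a,b)}}`; its range is the code `C_{D_{(a,b)}}`. -/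
def cmap (l m : ℕ) {F : Type*} [Field F] [Fintype F] [Algebra (ZMod 2) F] (a b : F) :
    (F × F) →ₗ[ZMod 2] (↥(Dset l m a b) → ZMod 2) :=
  LinearMap.pi fun d =>
    (Algebra.trace (ZMod 2) F).comp
      ((LinearMap.mulLeft (ZMod 2) (d : F × F).1).comp (LinearMap.fst (ZMod 2) F F) +
       (LinearMap.mulLeft (ZMod 2) (d : F × F).2).comp (LinearMap.snd (ZMod 2) F F))

/-- Hamming weight of a word indexed by `ι`. -/
def hwt {ι : Type*} (c : ι → ZMod 2) : ℕ := {i | c i ≠ 0}.ncard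

/-- Hamming weight of the codeword `c_{(u,v)}` of `C_{D_{(a,b)}}`. -/
def cwt (l m : ℕ) {F : Type*} [Field F] [Fintype F] [Algebra (ZMod 2) F] (a b u v : F) : ℕ :=
  {p : F × F | p ∈ Dset l m a b ∧ Algebra.trace (ZMod 2) F (u * p.1 + v * p.2) ≠ 0}.ncard

/-- The `r`-th generalized Hamming weight of a linear code `C ⊆ F_p^ι`:
the minimum support size of an `r`-dimensional subspace of `C`. -/
def GHW (p : ℕ) {ι : Type*} (C : Submodule (ZMod p) (ι → ZMod p)) (r : ℕ) : ℕ :=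
  sInf {n | ∃ V : Submodule (ZMod p) (ι → ZMod p), V ≤ C ∧
    Module.finrank (ZMod p) ↥V = r ∧ {i : ι | ∃ c ∈ V, c i ≠ 0}.ncard = n}

/-- The Hamming weight `wt(u^{(i)})` of the sub-vector
`u^{(i)} = (a_{l^{m-1}-i}, a_{2 l^{m-1}-i}, …, a_{(l-1) l^{m-1}-i})` of the coordinate
vector of `u` in the basis `{α, α², …, α^{φ(l^m)}}` (the basis `B`, indexed so that
`B j = α^{j+1}`). -/
def wtCoord (l m : ℕ) {F : Type*} [Field F] [Fintype F] [Algebra (ZMod 2) F]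
    (B : Module.Basis (Fin (Nat.totient (l ^ m))) (ZMod 2) F) (i : ℕ) (u : F) : ℕ :=
  {k : ℕ | k < l - 1 ∧ ∃ h : (k + 1) * l ^ (m - 1) - i - 1 < Nat.totient (l ^ m),
      B.repr u ⟨(k + 1) * l ^ (m - 1) - i - 1, h⟩ = 1}.ncard

/-- The exponential sum `B_{H_r} = Σ_{(x,y) ∈ F_q²} Σ_{β ∈ H_r}
(-1)^{Tr(β·(x,y) + a x^{(q-1)/l^m} + b y)}`. -/
def BH (l m : ℕ) {F : Type*} [Field F] [Fintype F] [Algebra (ZMod 2) F] (a b : F)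
    (H : Submodule (ZMod 2) (F × F)) : ℤ :=
  letI : Fintype ↥H := Fintype.ofFinite ↥H
  ∑ p : F × F, ∑ β : ↥H,
    chi ((β : F × F).1 * p.1 + (β : F × F).2 * p.2
      + a * p.1 ^ ((Fintype.card F - 1) / l ^ m) + b * p.2)

/-!
Writing `[Tr z = 0] = (1 + χ(z))/2` and `[Tr z ≠ 0] = (1 - χ(z))/2` turns the weight of
`c_{(u,v)}` into a character sum over `F_q²`. Summing first over `y` kills every term in which
`y` appears with a nonzero coefficient, so only `q²`, `q (1 + S(a,0))` and, when `v = 0`,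
`q (1 + S(a,u))` survive.
-/

open Finset

section Character

variable {F : Type*} [Field F] [Fintype F] [Algebra (ZMod 2) F]

lemma chi_zero : chi (0 : F) = 1 := by simp [chi]

lemma chi_add (x y : F) : chi (x + y) = chi x * chi y := by
  have zmod_two_cases : ∀ t : ZMod 2, t = 0 ∨ t = 1 := by decide
  unfold chi
  rw [map_add]
  rcases zmod_two_cases (Algebra.trace (ZMod 2) F x) with hx | hx <;>
    rcases zmod_two_cases (Algebra.trace (ZMod 2) F y) with hy | hy <;>
      (simp [hx, hy]; try decide)

lemma sum_chi_mul_eq_zero {c : F} (hc : c ≠ 0) : ∑ x : F, chi (c * x) = 0 := by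
  obtain ⟨b, hb⟩ : ∃ b : F, Algebra.trace (ZMod 2) F (c * b) ≠ 0 := by
    by_contra! h
    exact hc ((traceForm_nondegenerate (ZMod 2) F).1 c h)
  have hshift : ∑ x : F, chi (c * (x + b)) = ∑ x : F, chi (c * x) :=
    Fintype.sum_equiv (Equiv.addRight b) _ _ fun _ => rfl
  have hflip (x : F) : chi (c * (x + b)) = -chi (c * x) := by
    rw [mul_add, chi_add, show chi (c * b) = -1 from if_neg hb, mul_neg_one]
  simp only [hflip, sum_neg_distrib] at hshift
  linarith

open Classical in
lemma sum_prod_chi_add_mul (g : F → F) (v : F) :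
    ∑ p : F × F, chi (g p.1 + v * p.2) =
      if v = 0 then (Fintype.card F : ℤ) * ∑ x : F, chi (g x) else 0 := by
  simp only [Fintype.sum_prod_type, chi_add, ← mul_sum, ← sum_mul]
  split_ifs with hv
  · simp [hv, chi_zero, mul_comm]
  · rw [sum_chi_mul_eq_zero hv, mul_zero]

lemma sum_chi_eq_one_add_Sab (l m : ℕ) (hN : (Fintype.card F - 1) / l ^ m ≠ 0) (a b : F) :
    ∑ x : F, chi (a * x ^ ((Fintype.card F - 1) / l ^ m) + b * x) = 1 + Sab l m a b := by
  classical
  let : Fintype Fˣ := Fintype.ofFinite Fˣ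
  rw [Fintype.sum_eq_add_sum_subtype_ne _ 0, zero_pow hN, Sab]
  simp only [mul_zero, add_zero, chi_zero]
  congr 1
  exact Fintype.sum_equiv unitsEquivNeZero.symm _ _ fun _ => rfl

lemma four_mul_card_trace_eq_zero_and_ne_zero {α : Type*} [Fintype α] (f g : α → F) :
    4 * (#{p | Algebra.trace (ZMod 2) F (f p) = 0 ∧ Algebra.trace (ZMod 2) F (g p) ≠ 0} : ℤ) =
      ∑ p, (1 + chi (f p)) * (1 - chi (g p)) := by
  classical
  rw [card_filter, Nat.cast_sum, mul_sum]
  refine sum_congr rfl fun p _ => ?_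
  unfold chi
  split_ifs <;> simp_all

end Character

lemma div_pow_ne_zero_of_orderOf_two {F : Type*} [Fintype F] [Field F] (l m : ℕ)
    (hcard : Fintype.card F = 2 ^ Nat.totient (l ^ m))
    (h2 : orderOf (2 : ZMod (l ^ m)) = Nat.totient (l ^ m)) :
    (Fintype.card F - 1) / l ^ m ≠ 0 := by
  have hq : 1 < Fintype.card F := Fintype.one_lt_card
  have hn : l ^ m ≠ 0 := by
    intro h
    rw [h, Nat.totient_zero, pow_zero] at hcard
    omega
  have hmod : (1 : ZMod (l ^ m)) = (Fintype.card F : ℕ) := by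
    rw [hcard, Nat.cast_pow, ← h2, Nat.cast_ofNat, pow_orderOf_eq_one]
  have hdvd : l ^ m ∣ Fintype.card F - 1 :=
    (Nat.modEq_iff_dvd' hq.le).1 ((ZMod.natCast_eq_natCast_iff _ _ _).1 (by exact_mod_cast hmod))
  exact (Nat.div_ne_zero_iff_of_dvd hdvd).2 ⟨by omega, hn⟩

section Weight

variable {F : Type*} [Field F] [Fintype F] [Algebra (ZMod 2) F]

open Classical in
/-- The condition `(x, y) ≠ 0` in `D_{(a,0)}` is implied by `Tr(u x + v y) ≠ 0`. -/
lemma cwt_zero_eq_card (l m : ℕ) (a u v : F) :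
    cwt l m a 0 u v =
      #{p : F × F | Algebra.trace (ZMod 2) F (a * p.1 ^ ((Fintype.card F - 1) / l ^ m)) = 0 ∧
        Algebra.trace (ZMod 2) F (u * p.1 + v * p.2) ≠ 0} := by
  rw [cwt, ← Set.ncard_coe_finset]
  congr 1
  ext p
  simp only [Dset, zero_mul, add_zero, Set.mem_ofPred_eq, coe_filter, mem_univ, true_and]
  refine ⟨fun ⟨⟨_, h⟩, h'⟩ => ⟨h, h'⟩, fun ⟨h, h'⟩ => ⟨⟨?_, h⟩, h'⟩⟩
  rintro rfl
  simp at h'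

open Classical in
lemma four_mul_cwt (l m : ℕ) (hN : (Fintype.card F - 1) / l ^ m ≠ 0) (a u v : F)
    (huv : (u, v) ≠ (0, 0)) :
    4 * (cwt l m a 0 u v : ℤ) =
      (Fintype.card F : ℤ) ^ 2 + Fintype.card F * (1 + Sab l m a 0) -
        if v = 0 then (Fintype.card F : ℤ) * (1 + Sab l m a u) else 0 := by
  rw [cwt_zero_eq_card, four_mul_card_trace_eq_zero_and_ne_zero]
  set N := (Fintype.card F - 1) / l ^ m
  have hA : ∑ p : F × F, chi (a * p.1 ^ N + 0 * p.2) = Fintype.card F * (1 + Sab l m a 0) :=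
    (sum_prod_chi_add_mul (fun x => a * x ^ N) 0).trans (by
      simpa using sum_chi_eq_one_add_Sab l m hN a 0)
  have hB : ∑ p : F × F, chi (u * p.1 + v * p.2) = 0 := by
    rw [sum_prod_chi_add_mul (fun x => u * x) v]
    split_ifs with hv
    · rw [sum_chi_mul_eq_zero (fun hu => huv (by rw [hu, hv])), mul_zero]
    · rfl
  have hC : ∑ p : F × F, chi (a * p.1 ^ N + u * p.1 + v * p.2) =
      if v = 0 then (Fintype.card F : ℤ) * (1 + Sab l m a u) else 0 :=
    (sum_prod_chi_add_mul (fun x => a * x ^ N + u * x) v).trans (by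
      rw [sum_chi_eq_one_add_Sab l m hN])
  have expand (p : F × F) : (1 + chi (a * p.1 ^ N)) * (1 - chi (u * p.1 + v * p.2)) =
      1 + chi (a * p.1 ^ N + 0 * p.2) - chi (u * p.1 + v * p.2) -
        chi (a * p.1 ^ N + u * p.1 + v * p.2) := by
    rw [zero_mul, add_zero, add_assoc, chi_add (a * p.1 ^ N)]
    ring
  simp only [expand, sum_sub_distrib, sum_add_distrib, hA, hB, hC, sum_const, card_univ,
    Fintype.card_prod, nsmul_eq_mul]
  push_cast
  ring

end Weight

theorem stmt5_general (l m : ℕ)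
    {F : Type*} [Field F] [Fintype F] [Algebra (ZMod 2) F]
    (hcard : Fintype.card F = 2 ^ Nat.totient (l ^ m))
    (h2 : orderOf (2 : ZMod (l ^ m)) = Nat.totient (l ^ m))
    (a : F) (u v : F) (huv : (u, v) ≠ (0, 0)) :
    (v ≠ 0 →
      (cwt l m a 0 u v : ℚ) = 1 / 4 * (Fintype.card F : ℚ) * ((Fintype.card F : ℚ) + 1 + (Sab l m a 0 : ℚ))) ∧
    (v = 0 →
      (cwt l m a 0 u v : ℚ) =
        1 / 4 * (Fintype.card F : ℚ) * ((Fintype.card F : ℚ) + (Sab l m a 0 : ℚ) - (Sab l m a u : ℚ))) := by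
  classical
  have key : 4 * (cwt l m a 0 u v : ℚ) =
      (Fintype.card F : ℚ) ^ 2 + Fintype.card F * (1 + Sab l m a 0) -
        if v = 0 then (Fintype.card F : ℚ) * (1 + Sab l m a u) else 0 := by
    exact_mod_cast four_mul_cwt l m (div_pow_ne_zero_of_orderOf_two l m hcard h2) a u v huv
  refine ⟨fun hv => ?_, fun hv => ?_⟩
  · rw [if_neg hv] at key
    linear_combination key / 4
  · rw [if_pos hv] at key
    linear_combination key / 4

theorem stmt5 (l m : ℕ) (hl : l.Prime) (hm : 1 ≤ m)
    {F : Type*} [Field F] [Fintype F] [Algebra (ZMod 2) F]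
    (hcard : Fintype.card F = 2 ^ Nat.totient (l ^ m))
    (h2 : orderOf (2 : ZMod (l ^ m)) = Nat.totient (l ^ m))
    (a : F) (ha : a ≠ 0) (u v : F) (huv : (u, v) ≠ (0, 0)) :
    (v ≠ 0 →
      (cwt l m a 0 u v : ℚ) = 1 / 4 * (Fintype.card F : ℚ) * ((Fintype.card F : ℚ) + 1 + (Sab l m a 0 : ℚ))) ∧
    (v = 0 →
      (cwt l m a 0 u v : ℚ) =
        1 / 4 * (Fintype.card F : ℚ) * ((Fintype.card F : ℚ) + (Sab l m a 0 : ℚ) - (Sab l m a u : ℚ))) :=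
  stmt5_general l m hcard h2 a u v huv

end Paper
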